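/- Let Y be a topological space and consider Z = Y × [0,1] with the subset A = univ ×ˢ {0} (that is, A = Y × {0}). Then the homotopy link Holink(Z, A) is homotopy equivalent to Y, with the forward map of the homotopy equivalence given by the evaluation γ ↦ (first coordinate of γ(0)). -/

import Mathlib

open Set unitInterval

def Holink {Z : Type*} [TopologicalSpace Z] (A : Set Z) : Set C(unitInterval, Z) :=
  {γ | γ 0 ∈ A ∧ ∀ t : unitInterval, t ≠ 0 → γ t ∉ A}

/-!
A path `γ` in the homotopy link of `Y × {0}` in `Y × [0,1]` is deformed, at time `s`, into
`t ↦ ((γ ((1 - s) t)).1, (1 - s) (γ t).2 + s t)`. At `s = 1` this is the straight collar path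
`t ↦ ((γ 0).1, t)` over the starting point, so evaluation at `0` and the collar path are inverse
homotopy equivalences. The deformation never re-enters `Y × {0}` for `t > 0`, because a convex
combination of the two positive numbers `(γ t).2` and `t` is positive.
-/

theorem Set.Icc.min_le_convexComb {a b : ℝ} (x y : Icc a b) (s : I) :
    min x y ≤ Icc.convexComb x y s := by
  rcases le_total x y with hxy | hyx
  · simpa [min_eq_left hxy] using Icc.le_convexComb hxy s
  · simpa [min_eq_right hyx, Icc.convexComb_symm] using Icc.le_convexComb hyx (σ s)

namespace Holink

variable {Y : Type*} [TopologicalSpace Y]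

theorem mem_collar_iff {γ : C(I, Y × I)} :
    γ ∈ Holink ((univ : Set Y) ×ˢ ({0} : Set I)) ↔ (γ 0).2 = 0 ∧ ∀ t ≠ 0, (γ t).2 ≠ 0 := by
  simp [Holink]

def collarPath (y : Y) : C(I, Y × I) :=
  (ContinuousMap.const I y).prodMk (ContinuousMap.id I)

theorem collarPath_mem (y : Y) : collarPath y ∈ Holink ((univ : Set Y) ×ˢ ({0} : Set I)) :=
  mem_collar_iff.2 ⟨rfl, fun _ ht => ht⟩

def straighten (s : I) (γ : C(I, Y × I)) : C(I, Y × I) where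
  toFun t := ((γ (σ s * t)).1, Icc.convexComb (γ t).2 t s)

theorem continuous_straighten : Continuous fun p : I × C(I, Y × I) => straighten p.1 p.2 := by
  refine ContinuousMap.continuous_of_continuous_uncurry _ ?_
  change Continuous fun q : (I × C(I, Y × I)) × I =>
    ((q.1.2 (σ q.1.1 * q.2)).1, Icc.convexComb (q.1.2 q.2).2 q.2 q.1.1)
  fun_prop

@[simp]
theorem straighten_zero (γ : C(I, Y × I)) : straighten 0 γ = γ := by
  ext t <;> simp [straighten]

@[simp]
theorem straighten_one (γ : C(I, Y × I)) : straighten 1 γ = collarPath (γ 0).1 := by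
  ext t <;> simp [straighten, collarPath]

theorem straighten_mem {γ : C(I, Y × I)} (hγ : γ ∈ Holink ((univ : Set Y) ×ˢ ({0} : Set I)))
    (s : I) : straighten s γ ∈ Holink ((univ : Set Y) ×ˢ ({0} : Set I)) := by
  obtain ⟨hγ0, hγt⟩ := mem_collar_iff.1 hγ
  refine mem_collar_iff.2 ⟨by simp [straighten, hγ0], fun t ht => ?_⟩
  have hγt_pos : 0 < (γ t).2 := unitInterval.pos_iff_ne_zero.2 (hγt t ht)
  have ht_pos : 0 < t := unitInterval.pos_iff_ne_zero.2 ht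
  exact unitInterval.pos_iff_ne_zero.1 <|
    (lt_min hγt_pos ht_pos).trans_le (Icc.min_le_convexComb _ _ s)

def evalStart : C(Holink ((univ : Set Y) ×ˢ ({0} : Set I)), Y) :=
  ⟨fun γ => (γ.1 0).1, by fun_prop⟩

def collarPathMap : C(Y, Holink ((univ : Set Y) ×ˢ ({0} : Set I))) :=
  ⟨fun y => ⟨collarPath y, collarPath_mem y⟩,
    (ContinuousMap.continuous_of_continuous_uncurry collarPath continuous_id).subtype_mk _⟩

def straightenHomotopy :
    (ContinuousMap.id _).Homotopy (collarPathMap.comp (evalStart (Y := Y))) where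
  toFun p := ⟨straighten p.1 p.2.1, straighten_mem p.2.2 p.1⟩
  continuous_toFun :=
    (continuous_straighten.comp (continuous_id.prodMap continuous_subtype_val)).subtype_mk _
  map_zero_left γ := Subtype.ext (straighten_zero γ.1)
  map_one_left γ := Subtype.ext (straighten_one γ.1)

def collarHomotopyEquiv :
    ContinuousMap.HomotopyEquiv (Holink ((univ : Set Y) ×ˢ ({0} : Set I))) Y where
  toFun := evalStart
  invFun := collarPathMap
  left_inv := ⟨straightenHomotopy.symm⟩
  right_inv := .refl _

end Holink

/-- For the collared pair `(Y × [0,1], Y × {0})`, the homotopy link is homotopy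
equivalent to `Y`, with the forward map given by evaluation `γ ↦ (γ 0).1`. -/
theorem holink_collar_homotopyEquiv_base
    {Y : Type} [TopologicalSpace Y] :
    ∃ h : ContinuousMap.HomotopyEquiv
        (Holink ((univ : Set Y) ×ˢ ({0} : Set unitInterval))) Y,
      ∀ γ : Holink ((univ : Set Y) ×ˢ ({0} : Set unitInterval)),
        h.toFun γ = (γ.1 0).1 :=
  ⟨Holink.collarHomotopyEquiv, fun _ => rfl⟩
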